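/- The canonical element S of the Heisenberg double of a finite-dimensional Hopf algebra A is invertible, with inverse S^{-1} = Σ S_A(e_i) ⊗ e^i, where S_A is the antipode of A. -/

import Mathlib

/-!
In the Heisenberg double `H(A)` of a finite-dimensional Hopf algebra `A` (modeled as in
`stmt_0`: an algebra `H` with `φ : A ⊗ A* ≃ H` realizing the smash-product multiplication),
the canonical element `S = Σ e_i ⊗ e^i ∈ H ⊗ H` is invertible with inverse
`S⁻¹ = Σ S_A(e_i) ⊗ e^i`, where `S_A` is the antipode of `A`.
-/

open scoped TensorProduct

set_option synthInstance.maxHeartbeats 800000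
set_option maxHeartbeats 1600000

noncomputable def convMul (k A : Type) [CommRing k] [AddCommGroup A] [Module k A]
    [Coalgebra k A] (f g : Module.Dual k A) : Module.Dual k A :=
  LinearMap.mul' k k ∘ₗ TensorProduct.map f g ∘ₗ (Coalgebra.comul (R := k) (A := A))

section Aux

variable {k A : Type} [Field k] [Ring A] [HopfAlgebra k A]

/-- Any element of a tensor product is a `ℕ`-indexed finite sum of pure tensors. -/
lemma exists_nat_rep (x : A ⊗[k] A) :
    ∃ (s : Finset ℕ) (b₁ b₂ : ℕ → A), x = ∑ t ∈ s, b₁ t ⊗ₜ[k] b₂ t := by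
  classical
  obtain ⟨S, hS⟩ := TensorProduct.exists_finset x
  refine ⟨Finset.range S.card,
    fun t => if h : t < S.card then ((S.equivFin.symm ⟨t, h⟩ : S) : A × A).1 else 0,
    fun t => if h : t < S.card then ((S.equivFin.symm ⟨t, h⟩ : S) : A × A).2 else 0, ?_⟩
  have h1 : ∑ t ∈ Finset.range S.card,
      (if h : t < S.card then ((S.equivFin.symm ⟨t, h⟩ : S) : A × A).1 else 0) ⊗ₜ[k]
      (if h : t < S.card then ((S.equivFin.symm ⟨t, h⟩ : S) : A × A).2 else 0)
      = ∑ i : Fin S.card,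
        ((S.equivFin.symm i : S) : A × A).1 ⊗ₜ[k] ((S.equivFin.symm i : S) : A × A).2 := by
    rw [← Fin.sum_univ_eq_sum_range]
    exact Finset.sum_congr rfl fun i _ => by simp [i.isLt]
  rw [hS, h1, Equiv.sum_comp S.equivFin.symm
    (fun p : S => ((p : A × A).1 ⊗ₜ[k] (p : A × A).2))]
  exact (Finset.sum_coe_sort S fun p => p.1 ⊗ₜ[k] p.2).symm

lemma convMul_apply_repr (f g : Module.Dual k A) {a : A} {κ : Type*} (r : Coalgebra.Repr k a κ) :
    convMul k A f g a = ∑ i ∈ r.index, f (r.left i) * g (r.right i) := by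
  simp [convMul, ← r.eq, map_sum]

/-- Convolution with the counit on the right is the identity. -/
lemma convMul_counit_right (f : Module.Dual k A) :
    convMul k A f (Coalgebra.counit (R := k) (A := A)) = f := by
  ext a
  set r := Coalgebra.Repr.arbitrary k a with hr
  have key : ∑ i ∈ r.index, Coalgebra.counit (R := k) (r.right i) • r.left i = a := by
    have h2 := congrArg (TensorProduct.rid k A) (Coalgebra.sum_tmul_counit_eq r)
    rw [map_sum] at h2
    simp only [TensorProduct.rid_tmul, one_smul] at h2
    exact h2
  rw [convMul_apply_repr f _ r]
  calc ∑ i ∈ r.index, f (r.left i) * Coalgebra.counit (R := k) (r.right i)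
      = f (∑ i ∈ r.index, Coalgebra.counit (R := k) (r.right i) • r.left i) := by
        simp [map_sum, mul_comm]
    _ = f a := by rw [key]

variable {H : Type} [Ring H] [Algebra k H] (φ : (A ⊗[k] Module.Dual k A) ≃ₗ[k] H)

/-- Multiplication of elements of the form `φ (a ⊗ ε)`. -/
lemma mul_counit_eps
    (hmul : ∀ (a b : A) (f g : Module.Dual k A) (s : Finset ℕ) (b₁ b₂ : ℕ → A),
      Coalgebra.comul (R := k) b = ∑ t ∈ s, b₁ t ⊗ₜ[k] b₂ t →
      φ (a ⊗ₜ[k] f) * φ (b ⊗ₜ[k] g) =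
        ∑ t ∈ s, φ ((a * b₁ t) ⊗ₜ[k]
          convMul k A (f ∘ₗ LinearMap.mulLeft k (b₂ t)) g))
    (a b : A) :
    φ (a ⊗ₜ[k] (Coalgebra.counit (R := k) (A := A) : Module.Dual k A)) *
      φ (b ⊗ₜ[k] (Coalgebra.counit (R := k) (A := A) : Module.Dual k A)) =
    φ ((a * b) ⊗ₜ[k] (Coalgebra.counit (R := k) (A := A) : Module.Dual k A)) := by
  obtain ⟨s, b₁, b₂, hrep⟩ := exists_nat_rep (Coalgebra.comul (R := k) b)
  rw [hmul a b _ _ s b₁ b₂ hrep]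
  have h1 : ∀ t, ((Coalgebra.counit (R := k) (A := A) : Module.Dual k A) ∘ₗ
      LinearMap.mulLeft k (b₂ t)) = Coalgebra.counit (R := k) (b₂ t) •
      (Coalgebra.counit (R := k) (A := A) : Module.Dual k A) := by
    intro t; ext x
    simp [Bialgebra.counit_mul]
  have hb : ∑ t ∈ s, Coalgebra.counit (R := k) (b₂ t) • b₁ t = b := by
    have h2 := congrArg (TensorProduct.rid k A)
      (Coalgebra.sum_tmul_counit_eq (⟨s, b₁, b₂, hrep.symm⟩ : Coalgebra.Repr k b ℕ))
    rw [map_sum] at h2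
    simp only [TensorProduct.rid_tmul, one_smul] at h2
    exact h2
  calc ∑ t ∈ s, φ ((a * b₁ t) ⊗ₜ[k]
        convMul k A ((Coalgebra.counit (R := k) (A := A) : Module.Dual k A) ∘ₗ
          LinearMap.mulLeft k (b₂ t)) (Coalgebra.counit (R := k) (A := A)))
      = ∑ t ∈ s, φ ((Coalgebra.counit (R := k) (b₂ t) • (a * b₁ t)) ⊗ₜ[k]
          (Coalgebra.counit (R := k) (A := A) : Module.Dual k A)) := by
        refine Finset.sum_congr rfl fun t _ => ?_
        rw [convMul_counit_right, h1 t, TensorProduct.smul_tmul, TensorProduct.tmul_smul]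
    _ = φ ((a * ∑ t ∈ s, Coalgebra.counit (R := k) (b₂ t) • b₁ t) ⊗ₜ[k]
          (Coalgebra.counit (R := k) (A := A) : Module.Dual k A)) := by
        rw [Finset.mul_sum]
        rw [TensorProduct.sum_tmul, map_sum]
        refine Finset.sum_congr rfl fun t _ => ?_
        rw [mul_smul_comm, TensorProduct.smul_tmul, TensorProduct.tmul_smul]
    _ = _ := by rw [hb]

/-- Multiplication of elements of the form `φ (1 ⊗ f)`. -/
lemma mul_one_dual
    (hmul : ∀ (a b : A) (f g : Module.Dual k A) (s : Finset ℕ) (b₁ b₂ : ℕ → A),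
      Coalgebra.comul (R := k) b = ∑ t ∈ s, b₁ t ⊗ₜ[k] b₂ t →
      φ (a ⊗ₜ[k] f) * φ (b ⊗ₜ[k] g) =
        ∑ t ∈ s, φ ((a * b₁ t) ⊗ₜ[k]
          convMul k A (f ∘ₗ LinearMap.mulLeft k (b₂ t)) g))
    (f g : Module.Dual k A) :
    φ ((1 : A) ⊗ₜ[k] f) * φ ((1 : A) ⊗ₜ[k] g) = φ ((1 : A) ⊗ₜ[k] convMul k A f g) := by
  have h : Coalgebra.comul (R := k) (1 : A) =
      ∑ t ∈ ({0} : Finset ℕ), (fun _ => (1 : A)) t ⊗ₜ[k] (fun _ => (1 : A)) t := by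
    simp [Bialgebra.comul_one, Algebra.TensorProduct.one_def]
  rw [hmul 1 1 f g {0} _ _ h]
  simp [LinearMap.mulLeft_one]

variable {ι : Type} [Fintype ι] [DecidableEq ι] (e : Module.Basis ι k A)

lemma key_sum (u v : A →ₗ[k] A) (x : A ⊗[k] A) :
    ∑ i, ∑ j, (LinearMap.mul' k k
        (TensorProduct.map (e.dualBasis i : Module.Dual k A) (e.dualBasis j) x)) •
      (u (e i) * v (e j)) = LinearMap.mul' k A (TensorProduct.map u v x) := by
  induction x using TensorProduct.induction_on with
  | zero => simp
  | tmul a b =>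
      simp only [TensorProduct.map_tmul, LinearMap.mul'_apply]
      have ha : u a = ∑ i, e.dualBasis i a • u (e i) := by
        conv_lhs => rw [← Module.Basis.sum_repr e a]
        simp [Module.Basis.dualBasis_apply, map_sum, -Module.Basis.sum_repr]
      have hb : v b = ∑ j, e.dualBasis j b • v (e j) := by
        conv_lhs => rw [← Module.Basis.sum_repr e b]
        simp [Module.Basis.dualBasis_apply, map_sum, -Module.Basis.sum_repr]
      rw [ha, hb, Finset.sum_mul_sum]
      exact Finset.sum_congr rfl fun i _ => Finset.sum_congr rfl fun j _ =>
        (smul_mul_smul_comm _ _ _ _).symm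
  | add x y hx hy =>
      simp only [map_add, add_smul, Finset.sum_add_distrib, hx, hy]

lemma tensor_eq (u v : A →ₗ[k] A)
    (huv : ∀ a : A, LinearMap.mul' k A (TensorProduct.map u v (Coalgebra.comul (R := k) a)) =
      Coalgebra.counit (R := k) a • (1 : A)) :
    ∑ i, ∑ j, (u (e i) * v (e j)) ⊗ₜ[k]
        (convMul k A (e.dualBasis i) (e.dualBasis j) : Module.Dual k A) =
      (1 : A) ⊗ₜ[k] (Coalgebra.counit (R := k) (A := A) : Module.Dual k A) := by
  set Φ : A ⊗[k] Module.Dual k A →ₗ[k] (A →ₗ[k] A) :=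
    dualTensorHom k A A ∘ₗ (TensorProduct.comm k A (Module.Dual k A)).toLinearMap with hΦ
  have hinj : Function.Injective Φ := by
    intro x y hxy
    apply (TensorProduct.comm k A (Module.Dual k A)).injective
    apply (dualTensorHomEquivOfBasis (ι := ι) e).injective
    simpa only [hΦ, LinearMap.comp_apply, LinearEquiv.coe_coe,
      dualTensorHomEquivOfBasis_apply] using hxy
  apply hinj
  simp only [hΦ, map_sum, LinearMap.comp_apply, LinearEquiv.coe_coe, TensorProduct.comm_tmul]
  refine LinearMap.ext fun a => ?_
  simp only [LinearMap.coe_sum, Finset.sum_apply, dualTensorHom_apply]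
  have : ∀ i j, convMul k A (e.dualBasis i : Module.Dual k A) (e.dualBasis j) a =
      LinearMap.mul' k k (TensorProduct.map (e.dualBasis i : Module.Dual k A) (e.dualBasis j)
        (Coalgebra.comul (R := k) a)) := fun i j => rfl
  simp only [this]
  rw [key_sum e u v (Coalgebra.comul (R := k) a), huv a]

end Aux

theorem heisenberg_canonical_element_invertible
    (k : Type) [Field k] (A : Type) [Ring A] [HopfAlgebra k A] [FiniteDimensional k A]
    (ι : Type) [Fintype ι] [DecidableEq ι] (e : Module.Basis ι k A)
    (H : Type) [Ring H] [Algebra k H]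
    (φ : (A ⊗[k] Module.Dual k A) ≃ₗ[k] H)
    (hone : φ ((1 : A) ⊗ₜ[k] (Coalgebra.counit (R := k) (A := A) : Module.Dual k A)) = 1)
    (hmul : ∀ (a b : A) (f g : Module.Dual k A) (s : Finset ℕ) (b₁ b₂ : ℕ → A),
      Coalgebra.comul (R := k) b = ∑ t ∈ s, b₁ t ⊗ₜ[k] b₂ t →
      φ (a ⊗ₜ[k] f) * φ (b ⊗ₜ[k] g) =
        ∑ t ∈ s, φ ((a * b₁ t) ⊗ₜ[k]
          convMul k A (f ∘ₗ LinearMap.mulLeft k (b₂ t)) g)) :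
    -- `S * S⁻¹ = 1` and `S⁻¹ * S = 1` in `H ⊗ H`, where
    -- `S = Σ e_i ⊗ e^i` and `S⁻¹ = Σ S_A(e_i) ⊗ e^i`
    (∑ i, (φ (e i ⊗ₜ[k] (Coalgebra.counit (R := k) (A := A) : Module.Dual k A))) ⊗ₜ[k]
        (φ ((1 : A) ⊗ₜ[k] (e.dualBasis i : Module.Dual k A)))) *
      (∑ i, (φ ((HopfAlgebra.antipode (R := k) (e i)) ⊗ₜ[k]
          (Coalgebra.counit (R := k) (A := A) : Module.Dual k A))) ⊗ₜ[k]
        (φ ((1 : A) ⊗ₜ[k] (e.dualBasis i : Module.Dual k A)))) = 1 ∧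
    (∑ i, (φ ((HopfAlgebra.antipode (R := k) (e i)) ⊗ₜ[k]
          (Coalgebra.counit (R := k) (A := A) : Module.Dual k A))) ⊗ₜ[k]
        (φ ((1 : A) ⊗ₜ[k] (e.dualBasis i : Module.Dual k A)))) *
      (∑ i, (φ (e i ⊗ₜ[k] (Coalgebra.counit (R := k) (A := A) : Module.Dual k A))) ⊗ₜ[k]
        (φ ((1 : A) ⊗ₜ[k] (e.dualBasis i : Module.Dual k A)))) = 1 := by
  have main : ∀ u v : A →ₗ[k] A,
      (∀ a : A, LinearMap.mul' k A (TensorProduct.map u v (Coalgebra.comul (R := k) a)) =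
        Coalgebra.counit (R := k) a • (1 : A)) →
      (∑ i, (φ (u (e i) ⊗ₜ[k] (Coalgebra.counit (R := k) (A := A) : Module.Dual k A))) ⊗ₜ[k]
          (φ ((1 : A) ⊗ₜ[k] (e.dualBasis i : Module.Dual k A)))) *
        (∑ j, (φ (v (e j) ⊗ₜ[k] (Coalgebra.counit (R := k) (A := A) : Module.Dual k A))) ⊗ₜ[k]
          (φ ((1 : A) ⊗ₜ[k] (e.dualBasis j : Module.Dual k A)))) = 1 := by
    intro u v huv
    rw [Finset.sum_mul_sum]
    have step : ∀ i j : ι,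
        ((φ (u (e i) ⊗ₜ[k] (Coalgebra.counit (R := k) (A := A) : Module.Dual k A))) ⊗ₜ[k]
          (φ ((1 : A) ⊗ₜ[k] (e.dualBasis i : Module.Dual k A)))) *
        ((φ (v (e j) ⊗ₜ[k] (Coalgebra.counit (R := k) (A := A) : Module.Dual k A))) ⊗ₜ[k]
          (φ ((1 : A) ⊗ₜ[k] (e.dualBasis j : Module.Dual k A)))) =
        (φ ((u (e i) * v (e j)) ⊗ₜ[k]
            (Coalgebra.counit (R := k) (A := A) : Module.Dual k A))) ⊗ₜ[k]
        (φ ((1 : A) ⊗ₜ[k]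
            (convMul k A (e.dualBasis i) (e.dualBasis j) : Module.Dual k A))) := by
      intro i j
      rw [Algebra.TensorProduct.tmul_mul_tmul, mul_counit_eps φ hmul, mul_one_dual φ hmul]
    simp only [step]
    -- push the double sum through a linear map
    set F : A →ₗ[k] H :=
      φ.toLinearMap ∘ₗ (TensorProduct.mk k A (Module.Dual k A)).flip
        (Coalgebra.counit (R := k) (A := A)) with hF
    set G : Module.Dual k A →ₗ[k] H :=
      φ.toLinearMap ∘ₗ TensorProduct.mk k A (Module.Dual k A) 1 with hG
    have hFG : ∀ (x : A) (f : Module.Dual k A),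
        TensorProduct.map F G (x ⊗ₜ[k] f) =
          (φ (x ⊗ₜ[k] (Coalgebra.counit (R := k) (A := A) : Module.Dual k A))) ⊗ₜ[k]
            (φ ((1 : A) ⊗ₜ[k] f)) := by
      intro x f
      simp [hF, hG, TensorProduct.map_tmul]
    calc ∑ i, ∑ j, (φ ((u (e i) * v (e j)) ⊗ₜ[k]
            (Coalgebra.counit (R := k) (A := A) : Module.Dual k A))) ⊗ₜ[k]
          (φ ((1 : A) ⊗ₜ[k]
            (convMul k A (e.dualBasis i) (e.dualBasis j) : Module.Dual k A)))
        = TensorProduct.map F G (∑ i, ∑ j, (u (e i) * v (e j)) ⊗ₜ[k]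
            (convMul k A (e.dualBasis i) (e.dualBasis j) : Module.Dual k A)) := by
          rw [map_sum]
          refine Finset.sum_congr rfl fun i _ => ?_
          rw [map_sum]
          exact Finset.sum_congr rfl fun j _ => (hFG _ _).symm
      _ = TensorProduct.map F G
            ((1 : A) ⊗ₜ[k] (Coalgebra.counit (R := k) (A := A) : Module.Dual k A)) := by
          rw [tensor_eq e u v huv]
      _ = 1 := by
          rw [hFG, hone, Algebra.TensorProduct.one_def]
  constructor
  · have h := main LinearMap.id (HopfAlgebra.antipode k) (fun a => by
      have := HopfAlgebra.mul_antipode_lTensor_comul_apply (R := k) (A := A) a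
      have hmap : TensorProduct.map (LinearMap.id : A →ₗ[k] A)
          (HopfAlgebra.antipode (R := k) (A := A)) =
          LinearMap.lTensor A (HopfAlgebra.antipode (R := k) (A := A)) := rfl
      rw [hmap, this, Algebra.algebraMap_eq_smul_one])
    simpa using h
  · have h := main (HopfAlgebra.antipode k) LinearMap.id (fun a => by
      have := HopfAlgebra.mul_antipode_rTensor_comul_apply (R := k) (A := A) a
      have hmap : TensorProduct.map (HopfAlgebra.antipode (R := k) (A := A))
          (LinearMap.id : A →ₗ[k] A) =
          LinearMap.rTensor A (HopfAlgebra.antipode (R := k) (A := A)) := rfl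
      rw [hmap, this, Algebra.algebraMap_eq_smul_one])
    simpa using h
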